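/- Let m_x, m_y, m_z, m_w be positive integers, s_x, s_y, s_z, s_w > 0, and let X, Y, Z, Z', W be mutually independent random variables, where X, Y, W are Gamma-distributed with shapes m_x, m_y, m_w and scales s_x, s_y, s_w, and Z and Z' are both Gamma-distributed with shape m_z and scale s_z. Let Theta > 0, gamma_R > 0, c > 0, and set theta = Theta/gamma_R. Then the cumulative distribution function of the (upper-bounded) secondary SINR gamma^up = gamma_R * min( X/(Z + Y + c), W/(Z' + 1) ) at Theta equals: P( gamma^up < Theta ) = 1 - [ exp( - theta*c/s_x ) * sum_{n=0}^{m_x-1} ( (theta/s_x)^n / n! ) * sum_{i1=0}^{n} sum_{i2=0}^{n-i1} C(n,i1) * C(n-i1,i2) * c^{n-i1-i2} * ( Gamma(m_y+i1) / (Gamma(m_y) * s_y^{m_y}) ) * ( theta/s_x + 1/s_y )^{-(m_y+i1)} * ( Gamma(m_z+i2) / (Gamma(m_z) * s_z^{m_z}) ) * ( theta/s_x + 1/s_z )^{-(m_z+i2)} ] * [ exp( - theta/s_w ) * sum_{k=0}^{m_w-1} ( (theta/s_w)^k / k! ) * sum_{k1=0}^{k} C(k,k1) * ( Gamma(m_z+k1)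 / (Gamma(m_z) * s_z^{m_z}) ) * ( theta/s_w + 1/s_z )^{-(m_z+k1)} ], where C denotes binomial coefficients and Gamma is the Gamma function. -/

import Mathlib

/-!
Each hop succeeds on an event `θ V ≤ X` with `X ~ Γ(m, r)` independent of some `V ≥ 0`, so its
probability is `E[erlangTail m (r θ V)]`, where `erlangTail m t = e^{-t} ∑_{n<m} tⁿ/n!` is the
Erlang tail. For `V = Y + Z + c` (resp. `Z' + 1`) the binomial theorem writes `Vⁿ e^{-bV}` as a
combination of products `Yⁱ e^{-bY} · Zʲ e^{-bZ}`, whose expectations factor by independence into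
the tilted gamma moments `E[Yⁱ e^{-bY}] = Γ(a + i) / Γ(a) · rᵃ (r + b)^{-(a + i)}`. The outage
event is the complement of the two hop events, which are independent.
-/

open MeasureTheory ProbabilityTheory Real Finset Set Filter Topology
open scoped ENNReal

noncomputable def erlangTail (m : ℕ) (t : ℝ) : ℝ :=
  exp (-t) * ∑ n ∈ range m, t ^ n / n.factorial

lemma erlangTail_nonneg (m : ℕ) {t : ℝ} (ht : 0 ≤ t) : 0 ≤ erlangTail m t :=
  mul_nonneg (exp_pos _).le (sum_nonneg fun _ _ => by positivity)

lemma continuous_erlangTail (m : ℕ) : Continuous (erlangTail m) := by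
  unfold erlangTail; fun_prop

lemma erlangTail_mul (m : ℕ) (b w : ℝ) :
    erlangTail m (b * w) = ∑ n ∈ range m, b ^ n / n.factorial * (w ^ n * exp (-(b * w))) := by
  rw [erlangTail, mul_sum]
  exact sum_congr rfl fun n _ => by ring

lemma hasDerivAt_erlangTail_succ (k : ℕ) (t : ℝ) :
    HasDerivAt (erlangTail (k + 1)) (-(t ^ k * exp (-t) / k.factorial)) t := by
  have hexp : HasDerivAt (fun t => exp (-t)) (-exp (-t)) t := by
    simpa using (hasDerivAt_neg t).exp
  induction k with
  | zero =>
    have h1 : erlangTail 1 = fun t => exp (-t) := by funext t; simp [erlangTail]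
    simpa [h1] using hexp
  | succ k ih =>
    have hsucc : erlangTail (k + 2) =
        fun t => erlangTail (k + 1) t + exp (-t) * (t ^ (k + 1) / (k + 1).factorial) := by
      funext t; simp only [erlangTail, sum_range_succ _ (k + 1), mul_add]
    rw [hsucc]
    refine (ih.add (hexp.mul ((hasDerivAt_pow (k + 1) t).div_const
      ((k + 1).factorial : ℝ)))).congr_deriv ?_
    rw [Nat.add_sub_cancel, Nat.factorial_succ, Nat.cast_mul]
    field_simp
    push_cast
    ring

lemma tendsto_erlangTail_atTop (m : ℕ) : Tendsto (erlangTail m) atTop (𝓝 0) := by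
  have h : erlangTail m = fun t => ∑ n ∈ range m, t ^ n * exp (-t) / n.factorial := by
    funext t; rw [erlangTail, mul_sum]; congr 1; funext n; ring
  rw [h, ← sum_const_zero (s := range m)]
  refine tendsto_finsetSum _ fun n _ => ?_
  simpa using (tendsto_pow_mul_exp_neg_atTop_nhds_zero n).div_const (n.factorial : ℝ)

instance (a r : ℝ) : SFinite (gammaMeasure a r) := by
  unfold gammaMeasure; infer_instance

lemma ae_nonneg_gammaMeasure (a r : ℝ) : ∀ᵐ x ∂gammaMeasure a r, 0 ≤ x := by
  rw [ae_iff]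
  simp only [not_le]
  change gammaMeasure a r (Iio 0) = 0
  rw [gammaMeasure, withDensity_apply _ measurableSet_Iio]
  exact lintegral_gammaPDF_of_nonpos le_rfl

lemma gammaPDFReal_natCast_succ (k : ℕ) (r : ℝ) {x : ℝ} (hx : 0 ≤ x) :
    gammaPDFReal (k + 1 : ℕ) r x = r * ((r * x) ^ k * exp (-(r * x)) / k.factorial) := by
  have hΓ : Gamma ((k + 1 : ℕ) : ℝ) = k.factorial := by rw [Nat.cast_succ, Gamma_nat_eq_factorial]
  have hpow : x ^ (((k + 1 : ℕ) : ℝ) - 1) = x ^ k := by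
    rw [Nat.cast_succ, add_sub_cancel_right, rpow_natCast]
  rw [gammaPDFReal, if_pos hx, rpow_natCast, hΓ, hpow]
  ring

theorem gammaMeasure_Ici (k : ℕ) {r t : ℝ} (hr : 0 < r) (ht : 0 ≤ t) :
    gammaMeasure (k + 1 : ℕ) r (Ici t) = ENNReal.ofReal (erlangTail (k + 1) (r * t)) := by
  set f : ℝ → ℝ := fun x => r * ((r * x) ^ k * exp (-(r * x)) / k.factorial)
  have hderiv : ∀ x ∈ Ici t, HasDerivAt (fun x => -erlangTail (k + 1) (r * x)) (f x) x := by
    intro x _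
    refine (((hasDerivAt_erlangTail_succ k (r * x)).comp x
      ((hasDerivAt_id x).const_mul r)).neg).congr_deriv ?_
    simp only [f, mul_one]; ring
  have hf : ∀ x ∈ Ioi t, 0 ≤ f x := fun x hx => by
    have : 0 ≤ x := ht.trans hx.le
    positivity
  have hlim : Tendsto (fun x => -erlangTail (k + 1) (r * x)) atTop (𝓝 (-0)) :=
    ((tendsto_erlangTail_atTop _).comp (tendsto_id.const_mul_atTop hr)).neg
  have hpdf : ∀ x ∈ Ioi t, gammaPDF (k + 1 : ℕ) r x = ENNReal.ofReal (f x) := fun x hx => by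
    rw [gammaPDF, gammaPDFReal_natCast_succ k r (ht.trans hx.le)]
  rw [gammaMeasure, withDensity_apply _ measurableSet_Ici, ← restrict_Ioi_eq_restrict_Ici,
    setLIntegral_congr_fun measurableSet_Ioi hpdf,
    ← ofReal_integral_eq_lintegral_ofReal (integrableOn_Ioi_deriv_of_nonneg' hderiv hf hlim)
      ((ae_restrict_iff' measurableSet_Ioi).mpr (ae_of_all _ hf)),
    integral_Ioi_of_hasDerivAt_of_nonneg' hderiv hf hlim]
  simp

section GammaMoments

variable {a r : ℝ}

lemma gammaPDFReal_of_neg {x : ℝ} (hx : x < 0) : gammaPDFReal a r x = 0 :=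
  if_neg hx.not_ge

lemma integral_gammaMeasure_eq_setIntegral (ha : 0 < a) (hr : 0 < r) (g : ℝ → ℝ) :
    ∫ x, g x ∂gammaMeasure a r = ∫ x in Ioi 0, gammaPDFReal a r x * g x := by
  rw [gammaMeasure, integral_withDensity_eq_integral_toReal_smul (f := gammaPDF a r)
      (measurable_gammaPDFReal a r).ennreal_ofReal (ae_of_all _ fun _ => ENNReal.ofReal_lt_top),
    ← integral_Ici_eq_integral_Ioi, setIntegral_eq_integral_of_forall_compl_eq_zero
      fun x hx => by rw [gammaPDFReal_of_neg (Set.notMem_Ici.mp hx), zero_mul]]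
  simp [gammaPDF, ENNReal.toReal_ofReal (gammaPDFReal_nonneg ha hr _)]

lemma integrable_gammaMeasure_iff_integrableOn (ha : 0 < a) (hr : 0 < r) {g : ℝ → ℝ} :
    Integrable g (gammaMeasure a r) ↔ IntegrableOn (fun x => gammaPDFReal a r x * g x) (Ioi 0) := by
  rw [gammaMeasure, integrable_withDensity_iff_integrable_smul' (f := gammaPDF a r)
      (measurable_gammaPDFReal a r).ennreal_ofReal (ae_of_all _ fun _ => ENNReal.ofReal_lt_top),
    ← integrableOn_Ici_iff_integrableOn_Ioi, integrableOn_iff_integrable_of_support_subset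
      (Function.support_subset_iff'.mpr fun x hx => by
        rw [gammaPDFReal_of_neg (Set.notMem_Ici.mp hx), zero_mul])]
  simp [gammaPDF, ENNReal.toReal_ofReal (gammaPDFReal_nonneg ha hr _)]

lemma gammaPDFReal_mul_pow_mul_exp_neg_mul {b x : ℝ} (hx : 0 < x) (i : ℕ) :
    gammaPDFReal a r x * (x ^ i * exp (-(b * x))) =
      r ^ a / Gamma a * (x ^ (a + i - 1) * exp (-((r + b) * x))) := by
  rw [gammaPDFReal, if_pos hx.le, ← sub_add_eq_add_sub, rpow_add_natCast hx.ne',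
    show -((r + b) * x) = -(r * x) + -(b * x) by ring, exp_add]
  ring

variable {b : ℝ}

theorem integrable_pow_mul_exp_neg_mul_gammaMeasure (ha : 0 < a) (hr : 0 < r) (hrb : 0 < r + b)
    (i : ℕ) : Integrable (fun x => x ^ i * exp (-(b * x))) (gammaMeasure a r) := by
  rw [integrable_gammaMeasure_iff_integrableOn ha hr]
  refine IntegrableOn.congr_fun ?_ (fun x hx => (gammaPDFReal_mul_pow_mul_exp_neg_mul hx i).symm)
    measurableSet_Ioi
  refine Integrable.const_mul ?_ _
  refine (integrableOn_rpow_mul_exp_neg_mul_rpow (p := 1) (s := a + i - 1)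
    (by have := i.cast_nonneg (α := ℝ); linarith) one_pos hrb).congr_fun
    (fun x _ => by simp only [rpow_one, neg_mul]) measurableSet_Ioi

theorem integral_pow_mul_exp_neg_mul_gammaMeasure (ha : 0 < a) (hr : 0 < r) (hrb : 0 < r + b)
    (i : ℕ) : ∫ x, x ^ i * exp (-(b * x)) ∂gammaMeasure a r =
      Gamma (a + i) / Gamma a * r ^ a * (r + b) ^ (-(a + i)) := by
  rw [integral_gammaMeasure_eq_setIntegral ha hr,
    setIntegral_congr_fun measurableSet_Ioi fun x hx => gammaPDFReal_mul_pow_mul_exp_neg_mul hx i,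
    integral_const_mul, integral_rpow_mul_exp_neg_mul_Ioi (by positivity) hrb,
    one_div, inv_rpow hrb.le, ← rpow_neg hrb.le]
  ring

end GammaMoments

lemma integral_pow_mul_exp_neg_mul_gammaMeasure_one_div {m : ℕ} (hm : 0 < m) {s b : ℝ}
    (hs : 0 < s) (hb : 0 ≤ b) (i : ℕ) :
    ∫ x, x ^ i * exp (-(b * x)) ∂gammaMeasure m (1 / s) =
      Gamma (m + i) / (Gamma m * s ^ m) * (b + 1 / s) ^ (-((m : ℤ) + i)) := by
  rw [integral_pow_mul_exp_neg_mul_gammaMeasure (by positivity) (by positivity) (by positivity),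
    rpow_natCast, div_pow, one_pow, add_comm (1 / s),
    show -((m : ℝ) + i) = ((-((m : ℤ) + i) : ℤ) : ℝ) by push_cast; ring, rpow_intCast]
  ring

lemma add_pow_mul_exp_neg_mul (n : ℕ) (b v u : ℝ) :
    (v + u) ^ n * exp (-(b * (v + u))) =
      exp (-(b * u)) *
        ∑ j ∈ range (n + 1), n.choose j * u ^ (n - j) * (v ^ j * exp (-(b * v))) := by
  rw [add_pow, mul_add, neg_add, exp_add, sum_mul, mul_sum]
  exact sum_congr rfl fun j _ => by ring

lemma add_add_pow_mul_exp_neg_mul (n : ℕ) (b y z c : ℝ) :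
    (y + z + c) ^ n * exp (-(b * (y + z + c))) =
      exp (-(b * c)) * ∑ i ∈ range (n + 1), ∑ j ∈ range (n - i + 1),
        n.choose i * (n - i).choose j * c ^ (n - i - j) *
          ((y ^ i * exp (-(b * y))) * (z ^ j * exp (-(b * z)))) := by
  rw [add_assoc, add_pow_mul_exp_neg_mul, mul_sum, mul_sum]
  refine sum_congr rfl fun i _ => ?_
  rw [show ∀ e : ℝ, e * (n.choose i * (z + c) ^ (n - i) * (y ^ i * exp (-(b * y)))) =
      n.choose i * (y ^ i * exp (-(b * y))) * ((z + c) ^ (n - i) * e) from fun e => by ring,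
    add_pow_mul_exp_neg_mul, mul_sum, mul_sum, mul_sum]
  exact sum_congr rfl fun j _ => by ring

section Integration

variable {α : Type*} [MeasurableSpace α] {μ : Measure α}

lemma integral_finsetSum_const_mul {ι : Type*} (s : Finset ι) (c : ι → ℝ) {f : ι → α → ℝ}
    (hf : ∀ i ∈ s, Integrable (f i) μ) :
    ∫ x, ∑ i ∈ s, c i * f i x ∂μ = ∑ i ∈ s, c i * ∫ x, f i x ∂μ := by
  rw [integral_finsetSum s fun i hi => (hf i hi).const_mul (c i)]
  simp_rw [integral_const_mul]

end Integration

section Expansion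

variable {ν ν' : Measure ℝ} {b : ℝ}

theorem integral_erlangTail_mul_add (m : ℕ) (u : ℝ)
    (hν : ∀ j, Integrable (fun v => v ^ j * exp (-(b * v))) ν) :
    ∫ v, erlangTail m (b * (v + u)) ∂ν = exp (-(b * u)) * ∑ n ∈ range m, b ^ n / n.factorial *
      ∑ j ∈ range (n + 1), n.choose j * u ^ (n - j) * ∫ v, v ^ j * exp (-(b * v)) ∂ν := by
  simp_rw [erlangTail_mul, add_pow_mul_exp_neg_mul, mul_left_comm _ (exp (-(b * u))),
    ← mul_sum]
  rw [integral_const_mul, integral_finsetSum_const_mul _ _ fun n _ =>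
    integrable_finsetSum _ fun j _ => (hν j).const_mul _]
  simp_rw [integral_finsetSum_const_mul _ _ fun j _ => hν j]

theorem integral_erlangTail_mul_add_add [SFinite ν] [SFinite ν'] (m : ℕ) (c : ℝ)
    (hν : ∀ j, Integrable (fun v => v ^ j * exp (-(b * v))) ν)
    (hν' : ∀ j, Integrable (fun v => v ^ j * exp (-(b * v))) ν') :
    ∫ q, erlangTail m (b * (q.1 + q.2 + c)) ∂ν.prod ν' =
      exp (-(b * c)) * ∑ n ∈ range m, b ^ n / n.factorial *
        ∑ i ∈ range (n + 1), ∑ j ∈ range (n - i + 1),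
          n.choose i * (n - i).choose j * c ^ (n - i - j) *
            ((∫ y, y ^ i * exp (-(b * y)) ∂ν) * ∫ z, z ^ j * exp (-(b * z)) ∂ν') := by
  simp_rw [erlangTail_mul, add_add_pow_mul_exp_neg_mul, mul_left_comm _ (exp (-(b * c))),
    ← mul_sum]
  have hprod : ∀ i j, Integrable (fun q : ℝ × ℝ =>
      (q.1 ^ i * exp (-(b * q.1))) * (q.2 ^ j * exp (-(b * q.2)))) (ν.prod ν') :=
    fun i j => (hν i).mul_prod (hν' j)
  rw [integral_const_mul, integral_finsetSum_const_mul _ _ fun n _ =>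
    integrable_finsetSum _ fun i _ => integrable_finsetSum _ fun j _ => (hprod i j).const_mul _]
  refine congrArg _ (sum_congr rfl fun n _ => congrArg _ ?_)
  rw [integral_finsetSum _ fun i _ => integrable_finsetSum _ fun j _ => (hprod i j).const_mul _]
  refine sum_congr rfl fun i _ => ?_
  rw [integral_finsetSum_const_mul _ _ fun j _ => hprod i j]
  exact sum_congr rfl fun j _ => congrArg _ <|
    integral_prod_mul (fun y => y ^ i * exp (-(b * y))) (fun z => z ^ j * exp (-(b * z)))

end Expansion

section Probability

variable {Ω : Type*} [MeasurableSpace Ω] {μ : Measure Ω}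

lemma ae_nonneg_of_map_eq_gammaMeasure {Y : Ω → ℝ} (hY : Measurable Y) {a r : ℝ}
    (hYd : μ.map Y = gammaMeasure a r) : ∀ᵐ ω ∂μ, 0 ≤ Y ω :=
  ae_of_ae_map hY.aemeasurable (hYd ▸ ae_nonneg_gammaMeasure a r)

theorem measureReal_setOf_le_eq_integral_erlangTail [IsProbabilityMeasure μ] {β : Type*}
    [MeasurableSpace β] {U : Ω → β} {X : Ω → ℝ} {g : β → ℝ} (hU : Measurable U)
    (hX : Measurable X) (hg : Measurable g) (hUX : IndepFun U X μ)
    (hg0 : ∀ᵐ ω ∂μ, 0 ≤ g (U ω)) (k : ℕ) {r : ℝ} (hr : 0 < r)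
    (hXd : μ.map X = gammaMeasure (k + 1 : ℕ) r) :
    μ.real {ω | g (U ω) ≤ X ω} = ∫ u, erlangTail (k + 1) (r * g u) ∂μ.map U := by
  have hs : MeasurableSet {p : β × ℝ | g p.1 ≤ p.2} :=
    measurableSet_le (hg.comp measurable_fst) measurable_snd
  have hg0' : ∀ᵐ u ∂μ.map U, 0 ≤ g u :=
    (ae_map_iff hU.aemeasurable (measurableSet_le measurable_const hg)).mpr hg0
  rw [measureReal_def, show {ω | g (U ω) ≤ X ω} = (fun ω => (U ω, X ω)) ⁻¹' {p | g p.1 ≤ p.2}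
      from rfl, ← Measure.map_apply (hU.prodMk hX) hs,
    (indepFun_iff_map_prod_eq_prod_map_map hU.aemeasurable hX.aemeasurable).mp hUX, hXd,
    Measure.prod_apply hs, integral_eq_lintegral_of_nonneg_ae
      (hg0'.mono fun u hu => erlangTail_nonneg _ (mul_nonneg hr.le hu))
      ((continuous_erlangTail _).measurable.comp (hg.const_mul r)).aestronglyMeasurable]
  exact congrArg _ (lintegral_congr_ae (hg0'.mono fun u hu => gammaMeasure_Ici k hr hu))

theorem measureReal_mul_add_le_of_gamma [IsProbabilityMeasure μ] {X Z : Ω → ℝ}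
    (hX : Measurable X) (hZ : Measurable Z) (hZX : IndepFun Z X μ) {k : ℕ} {r a s θ u : ℝ}
    (hr : 0 < r) (ha : 0 < a) (hs : 0 < s) (hθ : 0 ≤ θ) (hu : 0 ≤ u)
    (hXd : μ.map X = gammaMeasure (k + 1 : ℕ) r) (hZd : μ.map Z = gammaMeasure a s) :
    μ.real {ω | θ * (Z ω + u) ≤ X ω} =
      exp (-(r * θ * u)) * ∑ n ∈ range (k + 1), (r * θ) ^ n / n.factorial *
        ∑ j ∈ range (n + 1), n.choose j * u ^ (n - j) *
          ∫ z, z ^ j * exp (-(r * θ * z)) ∂gammaMeasure a s := by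
  have hZ0 := ae_nonneg_of_map_eq_gammaMeasure hZ hZd
  rw [measureReal_setOf_le_eq_integral_erlangTail (g := fun z => θ * (z + u)) hZ hX (by fun_prop)
      hZX (by filter_upwards [hZ0] with ω hz; positivity) k hr hXd, hZd]
  simp_rw [← mul_assoc r θ]
  exact integral_erlangTail_mul_add _ _
    (integrable_pow_mul_exp_neg_mul_gammaMeasure (b := r * θ) ha hs (by positivity))

theorem measureReal_mul_add_add_le_of_gamma [IsProbabilityMeasure μ] {X Y Z : Ω → ℝ}
    (hX : Measurable X) (hY : Measurable Y) (hZ : Measurable Z)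
    (hYZX : IndepFun (fun ω => (Y ω, Z ω)) X μ) (hYZ : IndepFun Y Z μ) {k : ℕ}
    {r a s a' s' θ c : ℝ} (hr : 0 < r) (ha : 0 < a) (hs : 0 < s) (ha' : 0 < a') (hs' : 0 < s')
    (hθ : 0 ≤ θ) (hc : 0 ≤ c) (hXd : μ.map X = gammaMeasure (k + 1 : ℕ) r)
    (hYd : μ.map Y = gammaMeasure a s) (hZd : μ.map Z = gammaMeasure a' s') :
    μ.real {ω | θ * (Y ω + Z ω + c) ≤ X ω} =
      exp (-(r * θ * c)) * ∑ n ∈ range (k + 1), (r * θ) ^ n / n.factorial *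
        ∑ i ∈ range (n + 1), ∑ j ∈ range (n - i + 1), n.choose i * (n - i).choose j *
          c ^ (n - i - j) * ((∫ y, y ^ i * exp (-(r * θ * y)) ∂gammaMeasure a s) *
            ∫ z, z ^ j * exp (-(r * θ * z)) ∂gammaMeasure a' s') := by
  have hY0 := ae_nonneg_of_map_eq_gammaMeasure hY hYd
  have hZ0 := ae_nonneg_of_map_eq_gammaMeasure hZ hZd
  rw [measureReal_setOf_le_eq_integral_erlangTail (g := fun q : ℝ × ℝ => θ * (q.1 + q.2 + c))
      (hY.prodMk hZ) hX (by fun_prop) hYZX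
      (by filter_upwards [hY0, hZ0] with ω hy hz; positivity) k hr hXd,
    (indepFun_iff_map_prod_eq_prod_map_map hY.aemeasurable hZ.aemeasurable).mp hYZ, hYd, hZd]
  simp_rw [← mul_assoc r θ]
  exact integral_erlangTail_mul_add_add _ _
    (integrable_pow_mul_exp_neg_mul_gammaMeasure (b := r * θ) ha hs (by positivity))
    (integrable_pow_mul_exp_neg_mul_gammaMeasure (b := r * θ) ha' hs' (by positivity))

theorem measureReal_mul_min_div_lt [IsProbabilityMeasure μ] {X Y Z Z' W : Ω → ℝ}
    (hX : Measurable X) (hY : Measurable Y) (hZ : Measurable Z) (hZ' : Measurable Z')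
    (hW : Measurable W) (hY0 : ∀ᵐ ω ∂μ, 0 ≤ Y ω) (hZ0 : ∀ᵐ ω ∂μ, 0 ≤ Z ω)
    (hZ'0 : ∀ᵐ ω ∂μ, 0 ≤ Z' ω)
    (hind : IndepFun (fun ω => ((Y ω, Z ω), X ω)) (fun ω => (Z' ω, W ω)) μ)
    {Θ γ c : ℝ} (hγ : 0 < γ) (hc : 0 < c) :
    μ.real {ω | γ * min (X ω / (Z ω + Y ω + c)) (W ω / (Z' ω + 1)) < Θ} =
      1 - μ.real {ω | Θ / γ * (Y ω + Z ω + c) ≤ X ω} * μ.real {ω | Θ / γ * (Z' ω + 1) ≤ W ω} := by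
  have hs : MeasurableSet {p : (ℝ × ℝ) × ℝ | Θ / γ * (p.1.1 + p.1.2 + c) ≤ p.2} :=
    measurableSet_le (by fun_prop) measurable_snd
  have ht : MeasurableSet {p : ℝ × ℝ | Θ / γ * (p.1 + 1) ≤ p.2} :=
    measurableSet_le (by fun_prop) measurable_snd
  have hev : {ω | γ * min (X ω / (Z ω + Y ω + c)) (W ω / (Z' ω + 1)) < Θ} =ᵐ[μ]
      (({ω | Θ / γ * (Y ω + Z ω + c) ≤ X ω} ∩ {ω | Θ / γ * (Z' ω + 1) ≤ W ω})ᶜ : Set Ω) := by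
    refine eventuallyEq_set.mpr ?_
    filter_upwards [hY0, hZ0, hZ'0] with ω hy hz hz'
    simp only [mem_compl_iff, mem_inter_iff, mem_ofPred_eq, ← lt_div_iff₀' hγ, min_lt_iff,
      div_lt_iff₀ (by positivity : 0 < Z ω + Y ω + c), div_lt_iff₀ (by positivity : 0 < Z' ω + 1),
      not_and_or, not_le, add_comm (Y ω)]
  rw [measureReal_congr hev, probReal_compl_eq_one_sub ((measurableSet_le (by fun_prop) hX).inter
    (measurableSet_le (by fun_prop) hW))]
  simp only [measureReal_def]
  rw [← ENNReal.toReal_mul]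
  exact congrArg (fun t => 1 - ENNReal.toReal t) (hind.measure_inter_preimage_eq_mul _ _ hs ht)

end Probability

/-- cdf of the upper-bounded secondary SINR of Scenario (a):
`P(γR · min(X/(Z+Y+c), W/(Z'+1)) < Θ) = 1 - χ₁ · χ₂` in closed form, with
`θ = Θ/γR`. -/
theorem secondary_sinr_cdf_scenario_a
    {Ω : Type*} [MeasurableSpace Ω] (μ : Measure Ω) [IsProbabilityMeasure μ]
    (m_x m_y m_z m_w : ℕ) (hmx : 0 < m_x) (hmy : 0 < m_y) (hmz : 0 < m_z) (hmw : 0 < m_w)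
    (s_x s_y s_z s_w : ℝ) (hsx : 0 < s_x) (hsy : 0 < s_y) (hsz : 0 < s_z) (hsw : 0 < s_w)
    (X Y Z Z' W : Ω → ℝ)
    (hX : Measurable X) (hY : Measurable Y) (hZ : Measurable Z)
    (hZ' : Measurable Z') (hW : Measurable W)
    (hXd : μ.map X = gammaMeasure m_x (1 / s_x))
    (hYd : μ.map Y = gammaMeasure m_y (1 / s_y))
    (hZd : μ.map Z = gammaMeasure m_z (1 / s_z))
    (hZ'd : μ.map Z' = gammaMeasure m_z (1 / s_z))
    (hWd : μ.map W = gammaMeasure m_w (1 / s_w))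
    (hindep : iIndepFun ![X, Y, Z, Z', W] μ)
    (Θ γR c : ℝ) (hΘ : 0 < Θ) (hγR : 0 < γR) (hc : 0 < c)
    (θ : ℝ) (hθdef : θ = Θ / γR) :
    (μ {ω | γR * min (X ω / (Z ω + Y ω + c)) (W ω / (Z' ω + 1)) < Θ}).toReal =
      1 -
      (Real.exp (-(θ * c / s_x)) *
        ∑ n ∈ Finset.range m_x, ((θ / s_x) ^ n / (Nat.factorial n : ℝ)) *
          ∑ i1 ∈ Finset.range (n + 1), ∑ i2 ∈ Finset.range (n - i1 + 1),
            (n.choose i1 : ℝ) * ((n - i1).choose i2 : ℝ) * c ^ (n - i1 - i2) *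
            (Real.Gamma ((m_y : ℝ) + i1) / (Real.Gamma m_y * s_y ^ m_y)) *
            (θ / s_x + 1 / s_y) ^ (-((m_y : ℤ) + i1)) *
            (Real.Gamma ((m_z : ℝ) + i2) / (Real.Gamma m_z * s_z ^ m_z)) *
            (θ / s_x + 1 / s_z) ^ (-((m_z : ℤ) + i2))) *
      (Real.exp (-(θ / s_w)) *
        ∑ k ∈ Finset.range m_w, ((θ / s_w) ^ k / (Nat.factorial k : ℝ)) *
          ∑ k1 ∈ Finset.range (k + 1),
            (k.choose k1 : ℝ) *
            (Real.Gamma ((m_z : ℝ) + k1) / (Real.Gamma m_z * s_z ^ m_z)) *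
            (θ / s_w + 1 / s_z) ^ (-((m_z : ℤ) + k1))) := by
  obtain ⟨kx, rfl⟩ := Nat.exists_eq_add_one_of_ne_zero hmx.ne'
  obtain ⟨kw, rfl⟩ := Nat.exists_eq_add_one_of_ne_zero hmw.ne'
  have hθ : 0 ≤ θ := hθdef ▸ (div_pos hΘ hγR).le
  have hmeas : ∀ i, Measurable (![X, Y, Z, Z', W] i) := fun i => by fin_cases i <;> assumption
  have hhops : IndepFun (fun ω => ((Y ω, Z ω), X ω)) (fun ω => (Z' ω, W ω)) μ :=
    (hindep.indepFun_finset {0, 1, 2} {3, 4} (by decide) hmeas).comp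
      (φ := fun v : ({0, 1, 2} : Finset (Fin 5)) → ℝ =>
        ((v ⟨1, by decide⟩, v ⟨2, by decide⟩), v ⟨0, by decide⟩))
      (ψ := fun v : ({3, 4} : Finset (Fin 5)) → ℝ => (v ⟨3, by decide⟩, v ⟨4, by decide⟩))
      (by fun_prop) (by fun_prop)
  rw [← measureReal_def, measureReal_mul_min_div_lt hX hY hZ hZ' hW
      (ae_nonneg_of_map_eq_gammaMeasure hY hYd) (ae_nonneg_of_map_eq_gammaMeasure hZ hZd)
      (ae_nonneg_of_map_eq_gammaMeasure hZ' hZ'd) hhops hγR hc, ← hθdef,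
    measureReal_mul_add_add_le_of_gamma hX hY hZ
      (hindep.indepFun_prodMk hmeas 1 2 0 (by decide) (by decide))
      (hindep.indepFun (i := 1) (j := 2) (by decide)) (by positivity) (by positivity)
      (by positivity) (by positivity) (by positivity) hθ hc.le hXd hYd hZd,
    measureReal_mul_add_le_of_gamma hW hZ' (hindep.indepFun (i := 3) (j := 4) (by decide))
      (by positivity) (by positivity) (by positivity) hθ zero_le_one hWd hZ'd]
  have hbx : 0 ≤ θ / s_x := by positivity
  have hbw : 0 ≤ θ / s_w := by positivity
  simp_rw [one_div_mul_eq_div, integral_pow_mul_exp_neg_mul_gammaMeasure_one_div hmy hsy hbx,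
    integral_pow_mul_exp_neg_mul_gammaMeasure_one_div hmz hsz hbx,
    integral_pow_mul_exp_neg_mul_gammaMeasure_one_div hmz hsz hbw, div_mul_eq_mul_div θ s_x c]
  simp only [mul_one, one_pow, mul_assoc]
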